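/- Let Σ, Σ* ∈ ℝ^{d×d} be symmetric positive definite matrices. Then the Jensen–Bregman LogDet divergence is inversion invariant: d²_JBLD(Σ⁻¹, Σ*⁻¹) = d²_JBLD(Σ, Σ*). -/

import Mathlib

/-! Since `A⁻¹ + B⁻¹ = A⁻¹ (A + B) B⁻¹`, inverting both matrices lowers the log-determinant of
their midpoint by `log det A + log det B`, while `-(1/2) log det (A B)` changes sign and so rises
by exactly that amount. -/

open Matrix

/-- The Jensen–Bregman LogDet divergence
`d²(A,B) = log det((A+B)/2) − (1/2) log det (A B)`. -/
noncomputable def jbld {d : ℕ} (A B : Matrix (Fin d) (Fin d) ℝ) : ℝ :=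
  Real.log (((1 / 2 : ℝ) • (A + B)).det) - (1 / 2) * Real.log ((A * B).det)

theorem Matrix.det_smul_inv_add_inv {n K : Type*} [Fintype n] [DecidableEq n] [Field K]
    {A B : Matrix n n K} (hA : A.det ≠ 0) (hB : B.det ≠ 0) (c : K) :
    (c • (A⁻¹ + B⁻¹)).det = (c • (A + B)).det / (A.det * B.det) := by
  have hAB : IsUnit A ↔ IsUnit B := by
    simp only [isUnit_iff_isUnit_det, isUnit_iff_ne_zero, hA, hB, ne_eq, not_false_eq_true]
  rw [inv_add_inv hAB, det_smul, det_smul, det_mul, det_mul, det_nonsing_inv, det_nonsing_inv,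
    Ring.inverse_eq_inv, Ring.inverse_eq_inv]
  field_simp

theorem jbld_inv_inv {d : ℕ} {A B : Matrix (Fin d) (Fin d) ℝ}
    (hA : A.det ≠ 0) (hB : B.det ≠ 0) (hAB : (A + B).det ≠ 0) :
    jbld A⁻¹ B⁻¹ = jbld A B := by
  have hmid : ((1 / 2 : ℝ) • (A + B)).det ≠ 0 := by
    rw [det_smul]
    exact mul_ne_zero (by norm_num) hAB
  unfold jbld
  rw [det_smul_inv_add_inv hA hB, det_mul, det_mul, det_nonsing_inv, det_nonsing_inv,
    Ring.inverse_eq_inv, Ring.inverse_eq_inv, ← mul_inv, Real.log_inv,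
    Real.log_div hmid (mul_ne_zero hA hB), Real.log_mul hA hB]
  ring

/-- Inversion invariance of the Jensen–Bregman LogDet divergence:
`d²(A⁻¹, B⁻¹) = d²(A, B)` for positive definite `A`, `B`. -/
theorem jbld_inversion_invariant {d : ℕ} (A B : Matrix (Fin d) (Fin d) ℝ)
    (hA : A.PosDef) (hB : B.PosDef) :
    jbld A⁻¹ B⁻¹ = jbld A B :=
  jbld_inv_inv hA.det_pos.ne' hB.det_pos.ne' (hA.add hB).det_pos.ne'
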